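/- arXiv:2104.02103 — 6 statements merged into one kernel-verified Lean document; each statement's English description precedes it below -/
import Mathlib

section
/- Let H = (X,E) be an r-uniform hypergraph with n nodes (r ≥ 1) and suppose H has a no-rainbow r-coloring c*. Then there exist an r-coloring c of H and a set F ⊆ X with |F| = r such that: the nodes of F receive r pairwise distinct colors under c, all nodes in X \ F receive the same color under c, c agrees with c* on F, and the Hamming distance satisfies d(c, c*) ≤ (r−1)·n/r. -/
/-- A hyperedge `e` is a rainbow edge with respect to the `r`-coloring `c`
if all `r` colors appear among the nodes of `e`. -/
def IsRainbowEdge {V : Type*} {r : ℕ} (e : Finset V) (c : V → Fin r) : Prop :=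
  ∀ i : Fin r, ∃ v ∈ e, c v = i

/-- A no-rainbow `r`-coloring of the hypergraph with edge set `E` is a surjective
`r`-coloring with respect to which no hyperedge is a rainbow edge. -/
def IsNoRainbowColoring {V : Type*} {r : ℕ} (E : Finset (Finset V)) (c : V → Fin r) : Prop :=
  Function.Surjective c ∧ ∀ e ∈ E, ¬ IsRainbowEdge e c

/-!
Pick one node of each colour of `c*` to form `F`, and recolour every other node with a most
frequent colour `i₀` of `c*`. Only nodes whose `c*`-colour differs from `i₀` can change, and by
pigeonhole at least `n / r` nodes have colour `i₀`.
-/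

open Finset

theorem Function.Surjective.exists_finset_card_eq_injOn {α β : Type*} [DecidableEq α]
    [Fintype β] {f : α → β} (hf : Function.Surjective f) :
    ∃ F : Finset α, #F = Fintype.card β ∧ Set.InjOn f F := by
  refine ⟨univ.image (Function.surjInv hf), ?_, ?_⟩
  · rw [card_image_of_injective _ (Function.injective_surjInv hf), card_univ]
  · simp only [coe_image, coe_univ, Set.image_univ]
    rintro _ ⟨a, rfl⟩ _ ⟨b, rfl⟩ hab
    rw [Function.surjInv_eq hf, Function.surjInv_eq hf] at hab
    rw [hab]

theorem hammingDist_ite_const_add_card_fiber_le {ι β : Type*} [Fintype ι] [DecidableEq ι]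
    [DecidableEq β] (F : Finset ι) (g : ι → β) (b : β) :
    hammingDist (fun i => if i ∈ F then g i else b) g + #{i | g i = b} ≤ Fintype.card ι := by
  rw [← card_univ, ← card_filter_add_card_filter_not (s := univ) (fun i => g i = b), add_comm]
  refine Nat.add_le_add_left (card_le_card fun i => ?_) _
  simp only [mem_filter, mem_univ, true_and]
  split_ifs <;> tauto

theorem initial_candidate_pair_exists_general
    {V : Type*} [Fintype V] [DecidableEq V] {r n : ℕ} (hr : 1 ≤ r)
    (E : Finset (Finset V)) (hn : Fintype.card V = n)
    (cstar : V → Fin r) (hstar : IsNoRainbowColoring E cstar) :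
    ∃ (c : V → Fin r) (F : Finset V),
      F.card = r ∧
      (∀ u ∈ F, ∀ v ∈ F, u ≠ v → c u ≠ c v) ∧
      (∀ u ∉ F, ∀ v ∉ F, c u = c v) ∧
      (∀ v ∈ F, c v = cstar v) ∧
      (hammingDist c cstar : ℝ) ≤ (r - 1) * n / r := by
  obtain ⟨F, hFcard, hFinj⟩ := hstar.1.exists_finset_card_eq_injOn
  have : NeZero r := ⟨by omega⟩
  have hr₀ : (r : ℝ) ≠ 0 := by positivity
  obtain ⟨i₀, hi₀⟩ := Fintype.exists_le_card_fiber_of_nsmul_le_card cstar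
    (b := (n : ℝ) / r) (by rw [Fintype.card_fin, nsmul_eq_mul, mul_div_cancel₀ _ hr₀, hn])
  refine ⟨fun v => if v ∈ F then cstar v else i₀, F, by simpa using hFcard, ?_, ?_, ?_, ?_⟩
  · intro u hu v hv huv
    simpa only [if_pos hu, if_pos hv] using mt (hFinj hu hv) huv
  · intro u hu v hv
    simp only [if_neg hu, if_neg hv]
  · intro v hv
    simp only [if_pos hv]
  · have hdist : (hammingDist (fun v => if v ∈ F then cstar v else i₀) cstar : ℝ)
        + #{v | cstar v = i₀} ≤ n := by
      exact_mod_cast hn ▸ hammingDist_ite_const_add_card_fiber_le F cstar i₀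
    calc _ ≤ (n : ℝ) - n / r := by linarith
      _ = (r - 1) * n / r := by field_simp

/-- If an `r`-uniform hypergraph `H = (X, E)` with `n` nodes (`r ≥ 1`)
has a no-rainbow `r`-coloring `c*`, then there exist an `r`-coloring `c` and a set
`F ⊆ X` with `|F| = r` such that the nodes of `F` receive pairwise distinct colors
under `c`, all nodes outside `F` receive the same color under `c`, `c` agrees with
`c*` on `F`, and the Hamming distance satisfies `d(c, c*) ≤ (r-1)·n/r`. -/
theorem initial_candidate_pair_exists
    {V : Type*} [Fintype V] [DecidableEq V] {r n : ℕ} (hr : 1 ≤ r)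
    (E : Finset (Finset V)) (hn : Fintype.card V = n)
    (huniform : ∀ e ∈ E, e.card = r)
    (cstar : V → Fin r) (hstar : IsNoRainbowColoring E cstar) :
    ∃ (c : V → Fin r) (F : Finset V),
      F.card = r ∧
      (∀ u ∈ F, ∀ v ∈ F, u ≠ v → c u ≠ c v) ∧
      (∀ u ∉ F, ∀ v ∉ F, c u = c v) ∧
      (∀ v ∈ F, c v = cstar v) ∧
      (hammingDist c cstar : ℝ) ≤ (r - 1) * n / r :=
  initial_candidate_pair_exists_general hr E hn cstar hstar
end

section
/- Let H = (X,E) be an r-uniform hypergraph and let (c,F) be a candidate pair for H such that no hyperedge e with e ⊆ F is a rainbow edge with respect to c. If |e ∩ F| ≠ r−1 for every hyperedge e ∈ E, then H admits a no-rainbow r-coloring that agrees with c on F. -/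
/-- `(c, F)` is a candidate pair if every one of the `r` colors is used by `c`
on some node of `F`. -/
def IsCandidatePair {V : Type*} {r : ℕ} (c : V → Fin r) (F : Finset V) : Prop :=
  ∀ i : Fin r, ∃ v ∈ F, c v = i

/-- **Lemma 2.**  Let `(c, F)` be a candidate pair for an `r`-uniform
hypergraph `H = (X, E)` such that no hyperedge contained in `F` is a rainbow edge
with respect to `c`.  If `|e ∩ F| ≠ r - 1` for every hyperedge `e ∈ E`, then `H`
admits a no-rainbow `r`-coloring that agrees with `c` on `F`. -/
theorem no_rainbow_coloring_of_no_boundary_edge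
    {V : Type*} [Fintype V] [DecidableEq V] {r : ℕ}
    (E : Finset (Finset V)) (huniform : ∀ e ∈ E, e.card = r)
    (c : V → Fin r) (F : Finset V) (hcand : IsCandidatePair c F)
    (hnoRainbowInF : ∀ e ∈ E, e ⊆ F → ¬ IsRainbowEdge e c)
    (hcap : ∀ e ∈ E, (e ∩ F).card ≠ r - 1) :
    ∃ cstar : V → Fin r, IsNoRainbowColoring E cstar ∧ ∀ v ∈ F, cstar v = c v := by
  rcases Nat.eq_zero_or_pos r with hr | hr
  · subst hr
    refine ⟨c, ⟨fun i => i.elim0, fun e he _ => ?_⟩, fun v _ => rfl⟩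
    have hcard := huniform e he
    have : e = ∅ := Finset.card_eq_zero.mp hcard
    exact hnoRainbowInF e he (by simp [this]) (fun i => i.elim0)
  · set i0 : Fin r := ⟨0, hr⟩ with hi0
    set cstar : V → Fin r := fun v => if v ∈ F then c v else i0 with hcs
    have hagree : ∀ v ∈ F, cstar v = c v := fun v hv => by simp [hcs, hv]
    refine ⟨cstar, ⟨?_, ?_⟩, hagree⟩
    · intro i
      obtain ⟨v, hv, hcv⟩ := hcand i
      exact ⟨v, by simp [hcs, hv, hcv]⟩
    · intro e he hrb
      by_cases hsub : e ⊆ F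
      · refine hnoRainbowInF e he hsub (fun i => ?_)
        obtain ⟨v, hv, hcv⟩ := hrb i
        exact ⟨v, hv, by rw [← hagree v (hsub hv)]; exact hcv⟩
      · -- e not contained in F : |e ∩ F| ≤ r - 2
        have hlt : (e ∩ F).card < r := by
          rw [← huniform e he]
          exact Finset.card_lt_card (Finset.ssubset_iff_subset_ne.mpr
            ⟨Finset.inter_subset_left, fun h => hsub (Finset.inter_eq_left.mp h)⟩)
        have hle : (e ∩ F).card ≤ r - 2 := by
          have := hcap e he; omega
        -- image of cstar on e is contained in image of c on e∩F plus {i0}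
        have himg : e.image cstar ⊆ ((e ∩ F).image c) ∪ {i0} := by
          intro i hi
          obtain ⟨v, hv, hcv⟩ := Finset.mem_image.mp hi
          by_cases hvF : v ∈ F
          · exact Finset.mem_union_left _ (Finset.mem_image.mpr
              ⟨v, Finset.mem_inter.mpr ⟨hv, hvF⟩, by rwa [hagree v hvF] at hcv⟩)
          · have : cstar v = i0 := by simp [hcs, hvF]
            exact Finset.mem_union_right _ (by simp [← hcv, this])
        have huniv : (Finset.univ : Finset (Fin r)) ⊆ e.image cstar := by
          intro i _
          obtain ⟨v, hv, hcv⟩ := hrb i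
          exact Finset.mem_image.mpr ⟨v, hv, hcv⟩
        have h1 : r ≤ (e.image cstar).card := by
          simpa using Finset.card_le_card huniv
        have h2 : (e.image cstar).card ≤ (e ∩ F).card + 1 :=
          le_trans (Finset.card_le_card himg)
            (le_trans (Finset.card_union_le _ _)
              (by simpa using Nat.add_le_add_right (Finset.card_image_le) 1))
        have h3 := le_trans h1 h2
        have h4 := hcap e he
        clear_value cstar
        omega
end

section
/- Let H = (X,E) be an r-uniform hypergraph with r ≥ 2 and let (c,F) be a candidate pair for H such that no hyperedge e with e ⊆ F is a rainbow edge with respect to c, and |e ∩ F| ≠ r−1 for every hyperedge e ∈ E. Define the coloring c* by c*(v) = c(v) for all v ∈ F and c*(v) = 1 for all v ∈ X \ F. Then c* is a no-rainbow r-coloring of H. -/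
/-- Let `r ≥ 2` and let `(c, F)` be a candidate pair for an
`r`-uniform hypergraph `H = (X, E)` such that no hyperedge contained in `F` is a
rainbow edge with respect to `c`, and `|e ∩ F| ≠ r - 1` for every hyperedge `e`.
Then the coloring `c*` that agrees with `c` on `F` and assigns the first color
(color "1") to every node outside `F` is a no-rainbow `r`-coloring of `H`. -/
theorem explicit_no_rainbow_coloring
    {V : Type*} [Fintype V] [DecidableEq V] {r : ℕ} (hr : 2 ≤ r)
    (E : Finset (Finset V)) (huniform : ∀ e ∈ E, e.card = r)
    (c : V → Fin r) (F : Finset V) (hcand : IsCandidatePair c F)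
    (hnoRainbowInF : ∀ e ∈ E, e ⊆ F → ¬ IsRainbowEdge e c)
    (hcap : ∀ e ∈ E, (e ∩ F).card ≠ r - 1) :
    IsNoRainbowColoring E (fun v => if v ∈ F then c v else (⟨0, by omega⟩ : Fin r)) := by
  set z : Fin r := ⟨0, by omega⟩ with hz
  constructor
  · intro i
    obtain ⟨v, hvF, hv⟩ := hcand i
    exact ⟨v, by simp [hvF, hv]⟩
  · intro e he hrb
    by_cases hsub : e ⊆ F
    · apply hnoRainbowInF e he hsub
      intro i
      obtain ⟨v, hve, hv⟩ := hrb i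
      refine ⟨v, hve, ?_⟩
      simpa [hsub hve] using hv
    · -- e has a vertex outside F, so |e ∩ F| < r; with hcap, |e ∩ F| ≤ r - 2
      have hlt : (e ∩ F).card < r := by
        rw [← huniform e he]
        apply Finset.card_lt_card
        constructor
        · exact Finset.inter_subset_left
        · intro hle
          exact hsub (fun v hv => (Finset.mem_inter.mp (hle hv)).2)
      have hle2 : (e ∩ F).card ≤ r - 2 := by
        have := hcap e he; omega
      -- each nonzero color i has a vertex in e ∩ F
      have key : ∀ i : Fin r, i ≠ z → ∃ v ∈ e ∩ F, c v = i := by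
        intro i hi
        obtain ⟨v, hve, hv⟩ := hrb i
        by_cases hvF : v ∈ F
        · exact ⟨v, Finset.mem_inter.mpr ⟨hve, hvF⟩, by simpa [hvF] using hv⟩
        · exfalso; apply hi
          simp only [if_neg hvF] at hv
          exact hv.symm
      classical
      obtain ⟨v0, hv0⟩ : e.Nonempty := by
        rw [← Finset.card_pos, huniform e he]; omega
      set f : Fin r → V := fun i =>
        if h : i = z then v0 else Classical.choose (key i h) with hf
      have hcard : (Finset.univ.erase z).card ≤ (e ∩ F).card := by
        apply Finset.card_le_card_of_injOn f
        · intro i hi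
          have hi' : i ≠ z := (Finset.mem_erase.mp hi).1
          simp only [hf, dif_neg hi']
          exact (Classical.choose_spec (key i hi')).1
        · intro i hi j hj hij
          have hi' : i ≠ z := (Finset.mem_erase.mp hi).1
          have hj' : j ≠ z := (Finset.mem_erase.mp hj).1
          have h1 := (Classical.choose_spec (key i hi')).2
          have h2 := (Classical.choose_spec (key j hj')).2
          simp only [hf, dif_neg hi', dif_neg hj'] at hij
          rw [← h1, ← h2, hij]
      rw [Finset.card_erase_of_mem (Finset.mem_univ z), Finset.card_univ, Fintype.card_fin] at hcard
      omega
end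

section
/- Let H = (X,E) be an r-uniform hypergraph and let (c,F) be a candidate pair for H. If (c,F) is within g of a no-rainbow coloring for some integer g ≥ 0, then H admits a no-rainbow r-coloring that agrees with c on F. -/
/-- A candidate pair `(c, F)` is within `g` of a no-rainbow coloring if there is a
candidate pair `(c', F')` with `F ⊆ F'` such that `c'` agrees with `c` on `F`,
`d(c, c') ≤ g`, no hyperedge contained in `F'` is a rainbow edge with respect to
`c'`, and either `c'` is a no-rainbow `r`-coloring or `|e ∩ F'| ≠ r - 1` for
every hyperedge `e ∈ E`. -/
def WithinOfNoRainbow {V : Type*} [Fintype V] [DecidableEq V] {r : ℕ}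
    (E : Finset (Finset V)) (c : V → Fin r) (F : Finset V) (g : ℕ) : Prop :=
  ∃ (c' : V → Fin r) (F' : Finset V),
    F ⊆ F' ∧ IsCandidatePair c' F' ∧ (∀ v ∈ F, c' v = c v) ∧
    hammingDist c c' ≤ g ∧
    (∀ e ∈ E, e ⊆ F' → ¬ IsRainbowEdge e c') ∧
    (IsNoRainbowColoring E c' ∨ ∀ e ∈ E, (e ∩ F').card ≠ r - 1)

/-- If a candidate pair `(c, F)` for an `r`-uniform hypergraph
`H = (X, E)` is within `g` of a no-rainbow coloring, for some integer `g ≥ 0`,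
then `H` admits a no-rainbow `r`-coloring that agrees with `c` on `F`. -/
theorem no_rainbow_coloring_of_within
    {V : Type*} [Fintype V] [DecidableEq V] {r : ℕ}
    (E : Finset (Finset V)) (huniform : ∀ e ∈ E, e.card = r)
    (c : V → Fin r) (F : Finset V) (hcand : IsCandidatePair c F)
    (g : ℕ) (hwithin : WithinOfNoRainbow E c F g) :
    ∃ cstar : V → Fin r, IsNoRainbowColoring E cstar ∧ ∀ v ∈ F, cstar v = c v := by
  obtain ⟨c', F', hFF', hcand', hagree, -, hnoF', hcase⟩ := hwithin
  rcases hcase with h | h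
  · exact ⟨c', h, fun v hv => hagree v hv⟩
  rcases Nat.eq_zero_or_pos r with hr | hr
  · refine ⟨c', ⟨fun i => (Fin.elim0 (hr ▸ i)), fun e he _ => ?_⟩, hagree⟩
    have h1 := h e he
    have h2 : (e ∩ F').card ≤ e.card := Finset.card_le_card Finset.inter_subset_left
    rw [huniform e he, hr] at h2
    rw [hr] at h1
    omega
  set i0 : Fin r := ⟨0, hr⟩ with hi0
  set cs : V → Fin r := fun v => if v ∈ F' then c' v else i0 with hcs
  refine ⟨cs, ⟨?_, ?_⟩, ?_⟩
  · intro i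
    obtain ⟨v, hv, hcv⟩ := hcand' i
    exact ⟨v, by simp [hcs, hv, hcv]⟩
  · intro e he hrb
    by_cases hsub : e ⊆ F'
    · apply hnoF' e he hsub
      intro i
      obtain ⟨v, hv, hcv⟩ := hrb i
      refine ⟨v, hv, ?_⟩
      simpa [hcs, hsub hv] using hcv
    · -- counting argument
      have hk1 : (e ∩ F').card < e.card := by
        apply Finset.card_lt_card
        refine ⟨Finset.inter_subset_left, fun hle => hsub fun v hv => ?_⟩
        exact (Finset.mem_inter.mp (hle hv)).2
      rw [huniform e he] at hk1
      have hk2 := h e he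
      -- image of cs on e is small
      have himg : e.image cs ⊆ ((e ∩ F').image c') ∪ {i0} := by
        intro i hi
        obtain ⟨v, hv, hcv⟩ := Finset.mem_image.mp hi
        by_cases hvF : v ∈ F'
        · refine Finset.mem_union_left _ (Finset.mem_image.mpr ⟨v, ?_, ?_⟩)
          · exact Finset.mem_inter.mpr ⟨hv, hvF⟩
          · simpa [hcs, hvF] using hcv
        · apply Finset.mem_union_right
          simp only [Finset.mem_singleton]
          rw [← hcv]
          simp [hcs, hvF]
      have hbig : (Finset.univ : Finset (Fin r)) ⊆ e.image cs := by
        intro i _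
        obtain ⟨v, hv, hcv⟩ := hrb i
        exact Finset.mem_image.mpr ⟨v, hv, hcv⟩
      have h3 : r ≤ (e.image cs).card := by
        have := Finset.card_le_card hbig
        simpa using this
      have h4 : (e.image cs).card ≤ (e ∩ F').card + 1 := by
        calc (e.image cs).card ≤ (((e ∩ F').image c') ∪ {i0}).card :=
              Finset.card_le_card himg
          _ ≤ ((e ∩ F').image c').card + 1 := by
              simpa using Finset.card_union_le ((e ∩ F').image c') {i0}
          _ ≤ (e ∩ F').card + 1 := by
              exact Nat.add_le_add_right (Finset.card_image_le) 1
      omega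
  · intro v hv
    have hvF' : v ∈ F' := hFF' hv
    simp [hcs, hvF', hagree v hv]
end

section
/- Let H = (X,E) be an r-uniform hypergraph and let (c,F) be a candidate pair for H that is within g of a no-rainbow coloring, for some integer g ≥ 1. Suppose e ∈ E is a rainbow edge with respect to c with |e ∩ F| = r−1, and let v be the unique node of e not in F. Then there exists a color j ∈ {1,…,r} with j ≠ c(v) such that the candidate pair (c', F ∪ {v}), where c'(v) = j and c'(u) = c(u) for all u ≠ v, is within g−1 of a no-rainbow coloring. -/
lemma ham_aux {V : Type*} [Fintype V] [DecidableEq V] {r : ℕ}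
    (c c' : V → Fin r) (v : V) (h : c v ≠ c' v) :
    hammingDist (Function.update c v (c' v)) c' + 1 ≤ hammingDist c c' := by
  classical
  have hdef : ∀ (a b : V → Fin r),
      hammingDist a b = (Finset.univ.filter fun i => a i ≠ b i).card := by
    intro a b; rfl
  rw [hdef, hdef]
  set S := Finset.univ.filter fun i => Function.update c v (c' v) i ≠ c' i with hS
  set T := Finset.univ.filter fun i => c i ≠ c' i with hT
  have hvT : v ∈ T := by simp [hT, h]
  have hsub : S ⊆ T.erase v := by
    intro x hx
    simp only [hS, Finset.mem_filter, Finset.mem_univ, true_and] at hx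
    have hxv : x ≠ v := by
      intro hxv; subst hxv; simp [Function.update_self] at hx
    rw [Function.update_of_ne hxv] at hx
    exact Finset.mem_erase.2 ⟨hxv, by simp [hT, hx]⟩
  have h1 := Finset.card_le_card hsub
  rw [Finset.card_erase_of_mem hvT] at h1
  have h2 : 1 ≤ T.card := Finset.card_pos.2 ⟨v, hvT⟩
  omega

/-- **recursion step.**  Let `(c, F)` be a candidate pair for an
`r`-uniform hypergraph `H = (X, E)` that is within `g` of a no-rainbow coloring,
for some `g ≥ 1`.  Suppose `e ∈ E` is a rainbow edge with respect to `c` with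
`|e ∩ F| = r - 1`, and let `v` be the unique node of `e` not in `F`.  Then there
is a color `j ≠ c(v)` such that the candidate pair `(c', F ∪ {v})`, where `c'`
recolors `v` with `j` and agrees with `c` elsewhere, is within `g - 1` of a
no-rainbow coloring. -/
theorem recursion_step
    {V : Type*} [Fintype V] [DecidableEq V] {r : ℕ}
    (E : Finset (Finset V)) (huniform : ∀ e ∈ E, e.card = r)
    (c : V → Fin r) (F : Finset V) (hcand : IsCandidatePair c F)
    (g : ℕ) (hg : 1 ≤ g) (hwithin : WithinOfNoRainbow E c F g)
    (e : Finset V) (he : e ∈ E) (hrb : IsRainbowEdge e c)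
    (hcap : (e ∩ F).card = r - 1)
    (v : V) (hv : e \ F = {v}) :
    ∃ j : Fin r, j ≠ c v ∧
      IsCandidatePair (Function.update c v j) (insert v F) ∧
      WithinOfNoRainbow E (Function.update c v j) (insert v F) (g - 1) := by
  classical
  obtain ⟨c', F', hFF', hcand', hagree, hdist, hnorb, hdisj⟩ := hwithin
  have hvm : v ∈ e \ F := by rw [hv]; exact Finset.mem_singleton_self v
  have hve : v ∈ e := (Finset.mem_sdiff.1 hvm).1
  have hvF : v ∉ F := (Finset.mem_sdiff.1 hvm).2
  have hsub : ∀ x ∈ e, x ≠ v → x ∈ F := by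
    intro x hx hxv
    by_contra h
    have : x ∈ e \ F := Finset.mem_sdiff.2 ⟨hx, h⟩
    rw [hv] at this
    exact hxv (Finset.mem_singleton.1 this)
  have hkey : ¬ IsRainbowEdge e c' → c' v ≠ c v := by
    intro hnr hdv
    apply hnr
    intro i
    obtain ⟨w, hw, hcw⟩ := hrb i
    refine ⟨w, hw, ?_⟩
    by_cases hwv : w = v
    · subst hwv; rw [hdv]; exact hcw
    · rw [hagree w (hsub w hw hwv)]; exact hcw
  have hcandnew : IsCandidatePair (Function.update c v (c' v)) (insert v F) := by
    intro i
    obtain ⟨w, hw, hcw⟩ := hcand i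
    refine ⟨w, Finset.mem_insert_of_mem hw, ?_⟩
    rw [Function.update_of_ne (fun h => hvF (by rw [h] at hw; exact hw))]
    exact hcw
  have hagreenew : ∀ F'' : Finset V, v ∈ F'' → F' ⊆ F'' → (∀ u ∈ F'', c' u = c' u) → True :=
    fun _ _ _ _ => trivial
  rcases hdisj with hno | hcards
  · -- c' is a no-rainbow coloring
    have hne : c' v ≠ c v := hkey (hno.2 e he)
    refine ⟨c' v, hne, hcandnew, c', insert v F',
      Finset.insert_subset_insert _ hFF',
      fun i => (hcand' i).imp (fun w ⟨hw, h⟩ => ⟨Finset.mem_insert_of_mem hw, h⟩),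
      ?_, ?_, fun e' he' _ => hno.2 e' he', Or.inl hno⟩
    · intro u hu
      rcases Finset.mem_insert.1 hu with h | h
      · subst h; rw [Function.update_self]
      · rw [hagree u h, Function.update_of_ne (fun hh => hvF (by rw [hh] at h; exact h))]
    · have := ham_aux c c' v (fun h => hne h.symm)
      omega
  · -- every edge meets F' in ≠ r-1 nodes; deduce e ⊆ F'
    have hcard : (e ∩ F').card = r := by
      have h1 : e ∩ F ⊆ e ∩ F' := Finset.inter_subset_inter le_rfl hFF'
      have h2 : (e ∩ F').card ≤ e.card := Finset.card_le_card Finset.inter_subset_left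
      have h3 := Finset.card_le_card h1
      have h4 := huniform e he
      have h5 := hcards e he
      -- r ≥ 1 since v ∈ e and e.card = r
      have h6 : 0 < e.card := Finset.card_pos.2 ⟨v, hve⟩
      omega
    have heq : e ∩ F' = e := Finset.eq_of_subset_of_card_le Finset.inter_subset_left
      (by rw [hcard, huniform e he])
    have heF' : e ⊆ F' := fun x hx => (Finset.mem_inter.1 (heq ▸ hx)).2
    have hvF' : v ∈ F' := heF' hve
    have hne : c' v ≠ c v := hkey (hnorb e he heF')
    refine ⟨c' v, hne, hcandnew, c', F',
      Finset.insert_subset hvF' (hFF'), hcand', ?_, ?_, hnorb, Or.inr hcards⟩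
    · intro u hu
      rcases Finset.mem_insert.1 hu with h | h
      · subst h; rw [Function.update_self]
      · rw [hagree u h, Function.update_of_ne (fun hh => hvF (by rw [hh] at h; exact h))]
    · have := ham_aux c c' v (fun h => hne h.symm)
      omega
end

section
/- Let H = (X,E) be an r-uniform hypergraph with n nodes (r ≥ 1). Then H admits a no-rainbow r-coloring if and only if there exist an initial candidate pair (c,F) for H and a no-rainbow r-coloring c* of H such that c* agrees with c on F and d(c, c*) ≤ (r−1)·n/r. -/
/-- `(c, F)` is an initial candidate pair: `|F| = r`, the nodes of `F` receive
pairwise distinct colors under `c`, and all nodes outside `F` receive the same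
color under `c`. -/
def IsInitialCandidatePair {V : Type*} [DecidableEq V] {r : ℕ}
    (c : V → Fin r) (F : Finset V) : Prop :=
  F.card = r ∧
  (∀ u ∈ F, ∀ v ∈ F, u ≠ v → c u ≠ c v) ∧
  (∀ u ∉ F, ∀ v ∉ F, c u = c v)

/-- An `r`-uniform hypergraph `H = (X, E)` with `n` nodes
(`r ≥ 1`) admits a no-rainbow `r`-coloring if and only if there exist an initial
candidate pair `(c, F)` and a no-rainbow `r`-coloring `c*` of `H` such that `c*`
agrees with `c` on `F` and `d(c, c*) ≤ (r - 1)·n/r`. -/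
theorem no_rainbow_coloring_iff_initial_pair
    {V : Type*} [Fintype V] [DecidableEq V] {r n : ℕ} (hr : 1 ≤ r)
    (E : Finset (Finset V)) (hn : Fintype.card V = n)
    (huniform : ∀ e ∈ E, e.card = r) :
    (∃ cstar : V → Fin r, IsNoRainbowColoring E cstar) ↔
    (∃ (c : V → Fin r) (F : Finset V) (cstar : V → Fin r),
      IsInitialCandidatePair c F ∧
      IsNoRainbowColoring E cstar ∧
      (∀ v ∈ F, cstar v = c v) ∧
      (hammingDist c cstar : ℝ) ≤ (r - 1) * n / r) := by
  constructor
  · rintro ⟨cstar, hcstar⟩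
    have hsurj := hcstar.1
    set g : Fin r → V := Function.surjInv hsurj with hg
    have hgi : ∀ i, cstar (g i) = i := fun i => Function.surjInv_eq hsurj i
    have hginj : Function.Injective g := Function.injective_surjInv hsurj
    set F : Finset V := Finset.univ.image g with hF
    have hFcard : F.card = r := by
      rw [hF, Finset.card_image_of_injective _ hginj, Finset.card_univ, Fintype.card_fin]
    -- choose color j with largest fiber
    obtain ⟨j, -, hj⟩ := Finset.exists_max_image (Finset.univ : Finset (Fin r))
      (fun i => (Finset.univ.filter fun v => cstar v = i).card)
      ⟨⟨0, hr⟩, Finset.mem_univ _⟩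
    set A : Finset V := Finset.univ.filter fun v => cstar v = j with hA
    have hAn : n ≤ r * A.card := by
      have hsum : (Finset.univ : Finset V).card =
          ∑ i : Fin r, (Finset.univ.filter fun v => cstar v = i).card :=
        Finset.card_eq_sum_card_fiberwise (fun x _ => Finset.mem_univ _)
      have : ∑ i : Fin r, (Finset.univ.filter fun v => cstar v = i).card ≤
          ∑ _i : Fin r, A.card :=
        Finset.sum_le_sum fun i _ => hj i (Finset.mem_univ i)
      simp only [Finset.sum_const, Finset.card_univ, Fintype.card_fin, smul_eq_mul] at this
      calc n = (Finset.univ : Finset V).card := by rw [Finset.card_univ, hn]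
        _ ≤ r * A.card := by rw [hsum]; exact this
    -- the coloring c
    set c : V → Fin r := fun v => if v ∈ F then cstar v else j with hc
    have hcF : ∀ v ∈ F, c v = cstar v := fun v hv => by simp [hc, hv]
    have hcnF : ∀ v, v ∉ F → c v = j := fun v hv => by simp [hc, hv]
    -- the Hamming distance set
    set D : Finset V := Finset.univ.filter fun v => c v ≠ cstar v with hD
    have hdist : hammingDist c cstar = D.card := rfl
    -- D and F.erase (g j) are disjoint subsets of Aᶜ
    have hDsub : D ⊆ Aᶜ := by
      intro v hv
      rw [hD, Finset.mem_filter] at hv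
      have hvF : v ∉ F := fun h => hv.2 (hcF v h)
      rw [Finset.mem_compl, hA, Finset.mem_filter]
      push_neg
      intro _
      intro hcontra
      exact hv.2 (by rw [hcnF v hvF, hcontra])
    have hEsub : F.erase (g j) ⊆ Aᶜ := by
      intro v hv
      rw [Finset.mem_erase] at hv
      obtain ⟨i, -, rfl⟩ := Finset.mem_image.mp hv.2
      rw [Finset.mem_compl, hA, Finset.mem_filter]
      push_neg
      intro _
      rw [hgi]
      intro hij
      exact hv.1 (by rw [hij])
    have hdisj : Disjoint D (F.erase (g j)) := by
      rw [Finset.disjoint_left]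
      intro v hv hv2
      rw [hD, Finset.mem_filter] at hv
      exact hv.2 (hcF v (Finset.mem_of_mem_erase hv2))
    have hkey : D.card + (r - 1) ≤ n - A.card := by
      have h1 : (D ∪ F.erase (g j)).card ≤ Aᶜ.card :=
        Finset.card_le_card (Finset.union_subset hDsub hEsub)
      rw [Finset.card_union_of_disjoint hdisj] at h1
      have h2 : (F.erase (g j)).card = r - 1 := by
        rw [Finset.card_erase_of_mem (Finset.mem_image_of_mem g (Finset.mem_univ j)), hFcard]
      have h3 : Aᶜ.card = n - A.card := by
        rw [Finset.card_compl, Fintype.card_eq_nat_card, Nat.card_eq_fintype_card, hn]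
      rw [h2, h3] at h1
      exact h1
    have hAcard : A.card ≤ n := by
      rw [← hn, ← Finset.card_univ]
      exact Finset.card_le_card (Finset.subset_univ A)
    refine ⟨c, F, cstar, ⟨hFcard, ?_, ?_⟩, hcstar, fun v hv => (hcF v hv).symm, ?_⟩
    · intro u hu v hv huv
      rw [hcF u hu, hcF v hv]
      obtain ⟨i, -, rfl⟩ := Finset.mem_image.mp hu
      obtain ⟨i', -, rfl⟩ := Finset.mem_image.mp hv
      rw [hgi, hgi]
      intro h
      exact huv (by rw [h])
    · intro u hu v hv
      rw [hcnF u hu, hcnF v hv]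
    · rw [hdist]
      have hrpos : (0 : ℝ) < r := by positivity
      have hkey' : (D.card : ℝ) + ((r : ℝ) - 1) ≤ (n : ℝ) - A.card := by
        have := hkey
        have h4 : D.card + (r - 1) + A.card ≤ n := by omega
        have := (Nat.cast_le (α := ℝ)).mpr h4
        push_cast [Nat.cast_sub hr] at this
        linarith
      have hAn' : (n : ℝ) ≤ (r : ℝ) * A.card := by exact_mod_cast hAn
      have hr' : (1 : ℝ) ≤ r := by exact_mod_cast hr
      rw [le_div_iff₀ hrpos]
      nlinarith [hkey', hAn', hr']
  · rintro ⟨c, F, cstar, -, h, -, -⟩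
    exact ⟨cstar, h⟩
end
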